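/- arXiv:1304.3883 — 5 statements merged into one kernel-verified Lean document; each statement's English description precedes it below -/
import Mathlib

section
/- Let F ∈ ℂ[x,y,z,t] be homogeneous of degree d and S = (x₀,y₀,z₀,t₀) ∈ ℂ⁴ \ {0}. Define σ(m) = Q(∇F)(m)·S − 2Δ_S F(m)·κ(∇F)(m), where Q(a,b,c,d) = a²+b²+c², Δ_S F = x₀F_x + y₀F_y + z₀F_z + t₀F_t, and κ(a,b,c,d) = (a,b,c,0). Then for a point m ∈ ℂ⁴ \ {0}, σ(m) = 0 if and only if either F_x(m) = F_y(m) = F_z(m) = 0, or both Q(∇F)(m) = 0 and Δ_S F(m) = 0. -/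
open MvPolynomial

/-- Gradient of a polynomial in 4 variables, evaluated at a point. -/
noncomputable def grad (F : MvPolynomial (Fin 4) ℂ) (m : Fin 4 → ℂ) : Fin 4 → ℂ :=
  fun i => eval m (pderiv i F)

/-- The quadratic form `Q(a,b,c,d) = a² + b² + c²` on `ℂ⁴`. -/
def Qf (v : Fin 4 → ℂ) : ℂ := v 0 ^ 2 + v 1 ^ 2 + v 2 ^ 2

/-- The map `κ(a,b,c,d) = (a,b,c,0)`. -/
def kappa (v : Fin 4 → ℂ) : Fin 4 → ℂ := ![v 0, v 1, v 2, 0]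

/-- `Δ_S F(m) = x₀F_x(m) + y₀F_y(m) + z₀F_z(m) + t₀F_t(m)`. -/
noncomputable def deltaS (F : MvPolynomial (Fin 4) ℂ) (S m : Fin 4 → ℂ) : ℂ :=
  ∑ i, S i * grad F m i

/-- `σ(m) = Q(∇F)(m)·S − 2 Δ_S F(m) · κ(∇F)(m)`. -/
noncomputable def sigmaMap (F : MvPolynomial (Fin 4) ℂ) (S m : Fin 4 → ℂ) : Fin 4 → ℂ :=
  fun i => Qf (grad F m) * S i - 2 * deltaS F S m * kappa (grad F m) i

/-- For `m ≠ 0`, `σ(m) = 0` iff `F_x(m) = F_y(m) = F_z(m) = 0`, or both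
`Q(∇F)(m) = 0` and `Δ_S F(m) = 0`. -/
theorem stmt0 (F : MvPolynomial (Fin 4) ℂ) (d : ℕ) (hF : F.IsHomogeneous d)
    (S : Fin 4 → ℂ) (hS : S ≠ 0) (m : Fin 4 → ℂ) (hm : m ≠ 0) :
    sigmaMap F S m = 0 ↔
      ((grad F m 0 = 0 ∧ grad F m 1 = 0 ∧ grad F m 2 = 0) ∨
        (Qf (grad F m) = 0 ∧ deltaS F S m = 0)) := by
  set g := grad F m with hg
  set Q := Qf (grad F m) with hQdef
  set D := deltaS F S m with hDdef
  have hQ' : Q = g 0 ^ 2 + g 1 ^ 2 + g 2 ^ 2 := rfl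
  have hD' : D = S 0 * g 0 + S 1 * g 1 + S 2 * g 2 + S 3 * g 3 := by
    rw [hDdef, deltaS, Fin.sum_univ_four]
  have hk0 : kappa g 0 = g 0 := rfl
  have hk1 : kappa g 1 = g 1 := rfl
  have hk2 : kappa g 2 = g 2 := rfl
  have hk3 : kappa g 3 = 0 := rfl
  constructor
  · intro h
    have h0 : Q * S 0 - 2 * D * g 0 = 0 := by
      have := congrFun h 0; rwa [sigmaMap, hk0] at this
    have h1 : Q * S 1 - 2 * D * g 1 = 0 := by
      have := congrFun h 1; rwa [sigmaMap, hk1] at this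
    have h2 : Q * S 2 - 2 * D * g 2 = 0 := by
      have := congrFun h 2; rwa [sigmaMap, hk2] at this
    have h3 : Q * S 3 = 0 := by
      have := congrFun h 3; rw [sigmaMap, hk3] at this
      simpa using this
    by_cases hQ0 : Q = 0
    · by_cases hD0 : D = 0
      · exact Or.inr ⟨hQ0, hD0⟩
      · have hD2 : (2 : ℂ) * D ≠ 0 := by
          simp [hD0]
        refine Or.inl ⟨?_, ?_, ?_⟩
        · have : 2 * D * g 0 = 0 := by linear_combination S 0 * hQ0 - h0
          exact (mul_eq_zero.mp this).resolve_left hD2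
        · have : 2 * D * g 1 = 0 := by linear_combination S 1 * hQ0 - h1
          exact (mul_eq_zero.mp this).resolve_left hD2
        · have : 2 * D * g 2 = 0 := by linear_combination S 2 * hQ0 - h2
          exact (mul_eq_zero.mp this).resolve_left hD2
    · exfalso
      apply hS
      have hS3 : S 3 = 0 := (mul_eq_zero.mp h3).resolve_left hQ0
      have hQD : Q * D = 0 := by
        linear_combination (-(g 0) * h0) - g 1 * h1 - g 2 * h2 - Q * hD' +
          2 * D * hQ' - Q * g 3 * hS3
      have hD0 : D = 0 := (mul_eq_zero.mp hQD).resolve_left hQ0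
      funext i
      fin_cases i
      · have : Q * S 0 = 0 := by linear_combination h0 + 2 * g 0 * hD0
        simpa using (mul_eq_zero.mp this).resolve_left hQ0
      · have : Q * S 1 = 0 := by linear_combination h1 + 2 * g 1 * hD0
        simpa using (mul_eq_zero.mp this).resolve_left hQ0
      · have : Q * S 2 = 0 := by linear_combination h2 + 2 * g 2 * hD0
        simpa using (mul_eq_zero.mp this).resolve_left hQ0
      · simpa using hS3
  · intro h
    funext i
    rcases h with ⟨e0, e1, e2⟩ | ⟨hQ0, hD0⟩
    · have hQ0 : Q = 0 := by rw [hQ', e0, e1, e2]; ring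
      have hki : kappa g i = 0 := by
        fin_cases i <;> simp [kappa, e0, e1, e2]
      show Q * S i - 2 * D * kappa g i = 0
      rw [hQ0, hki]; ring
    · show Q * S i - 2 * D * kappa g i = 0
      rw [hQ0, hD0]; ring
end

section
/- Let F ∈ ℂ[x,y,z,t] be homogeneous of degree d, S ∈ ℂ⁴ \ {0}, and σ(m) = Q(∇F)(m)·S − 2Δ_S F(m)·κ(∇F)(m). Suppose m ∈ ℂ⁴ \ {0} satisfies F(m) = 0, σ(m) ≠ 0, and σ(m) = λ·m for some λ ∈ ℂ. Then either Δ_S F(m) = 0, in which case σ(m) = Q(∇F)(m)·S (so m is proportional to S), or Q(∇F)(m) = 0, in which case σ(m) = −2Δ_S F(m)·κ(∇F)(m) (so m is proportional to κ(∇F)(m)). -/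
open MvPolynomial

lemma euler_id (F : MvPolynomial (Fin 4) ℂ) (d : ℕ) (hF : F.IsHomogeneous d)
    (m : Fin 4 → ℂ) : ∑ i, m i * eval m (pderiv i F) = d * eval m F := by
  classical
  conv_lhs => rw [F.as_sum]
  conv_rhs => rw [F.as_sum]
  simp only [map_sum, Finset.mul_sum]
  rw [Finset.sum_comm]
  refine Finset.sum_congr rfl fun s hs => ?_
  have hdeg : ∑ i, s i = d := by
    have := hF (mem_support_iff.mp hs)
    rw [Finsupp.weight_apply, Finsupp.sum_fintype] at this
    · simpa using this
    · simp
  set c := coeff s F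
  have key : ∀ i, m i * eval m (pderiv i (monomial s c))
      = (s i : ℂ) * (c * ∏ j, m j ^ s j) := by
    intro i
    rw [pderiv_monomial, eval_monomial, Finsupp.prod_pow]
    simp only [Finsupp.tsub_apply, Finsupp.single_apply]
    rcases Nat.eq_zero_or_pos (s i) with h | h
    · simp [h]
    · rw [← Finset.prod_erase_mul _ _ (Finset.mem_univ i),
        ← Finset.prod_erase_mul _ _ (Finset.mem_univ i)]
      rw [Finset.prod_congr rfl (fun j hj => by
        rw [if_neg (Finset.ne_of_mem_erase hj).symm, Nat.sub_zero])]
      rw [if_pos rfl]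
      have h3 : m i * m i ^ (s i - 1) = m i ^ s i := by
        conv_rhs => rw [← Nat.succ_pred_eq_of_pos h, pow_succ]
        rw [mul_comm]
        rfl
      calc m i * (c * ↑(s i) * ((∏ j ∈ Finset.univ.erase i, m j ^ s j) * m i ^ (s i - 1)))
          = ↑(s i) * (c * ((∏ j ∈ Finset.univ.erase i, m j ^ s j) * (m i * m i ^ (s i - 1)))) := by ring
        _ = _ := by rw [h3]
  rw [Finset.sum_congr rfl fun i _ => key i, ← Finset.sum_mul, eval_monomial,
    Finsupp.prod_pow]
  norm_cast
  rw [hdeg]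

/-- If `m ≠ 0` lies on `F = 0`, `σ(m) ≠ 0` and `σ(m)` is proportional to `m`, then
either `Δ_S F(m) = 0`, `σ(m) = Q(∇F)(m)·S` and `m` is proportional to `S`, or
`Q(∇F)(m) = 0`, `σ(m) = −2Δ_S F(m)·κ(∇F)(m)` and `m` is proportional to `κ(∇F)(m)`. -/
theorem stmt2 (F : MvPolynomial (Fin 4) ℂ) (d : ℕ) (hF : F.IsHomogeneous d)
    (S : Fin 4 → ℂ) (hS : S ≠ 0) (m : Fin 4 → ℂ) (hm : m ≠ 0)
    (hFm : eval m F = 0) (hσ : sigmaMap F S m ≠ 0)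
    (lam : ℂ) (hprop : sigmaMap F S m = lam • m) :
    (deltaS F S m = 0 ∧ sigmaMap F S m = Qf (grad F m) • S ∧ ∃ c : ℂ, m = c • S) ∨
      (Qf (grad F m) = 0 ∧ sigmaMap F S m = (-2 * deltaS F S m) • kappa (grad F m) ∧
        ∃ c : ℂ, m = c • kappa (grad F m)) := by
  have heuler : ∑ i, m i * grad F m i = 0 := by
    have h := euler_id F d hF m
    rw [hFm, mul_zero] at h
    simpa [grad] using h
  have hlam : lam ≠ 0 := by
    intro h
    exact hσ (by rw [hprop, h, zero_smul])
  have hminv : m = lam⁻¹ • sigmaMap F S m := by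
    rw [hprop, smul_smul, inv_mul_cancel₀ hlam, one_smul]
  have hdot : Qf (grad F m) * deltaS F S m = 0 := by
    have h1 : ∑ i, sigmaMap F S m i * grad F m i
        = -(Qf (grad F m) * deltaS F S m) := by
      simp only [sigmaMap, deltaS, Qf, kappa, Fin.sum_univ_four]
      simp only [Matrix.cons_val_zero, Matrix.cons_val_one, Matrix.head_cons,
        Matrix.cons_val_two, Matrix.tail_cons, Matrix.cons_val_three]
      ring
    have h2 : ∑ i, sigmaMap F S m i * grad F m i
        = lam * ∑ i, m i * grad F m i := by
      rw [hprop, Finset.mul_sum]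
      refine Finset.sum_congr rfl fun i _ => ?_
      simp [mul_assoc]
    rw [h2, heuler, mul_zero] at h1
    exact neg_eq_zero.mp h1.symm
  rcases mul_eq_zero.mp hdot with hQ | hΔ
  · right
    have hσeq : sigmaMap F S m = (-2 * deltaS F S m) • kappa (grad F m) := by
      funext i
      simp [sigmaMap, hQ]
    exact ⟨hQ, hσeq, ⟨lam⁻¹ * (-2 * deltaS F S m), by
      conv_lhs => rw [hminv]
      rw [hσeq, smul_smul]⟩⟩
  · left
    have hσeq : sigmaMap F S m = Qf (grad F m) • S := by
      funext i
      simp [sigmaMap, hΔ]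
    exact ⟨hΔ, hσeq, ⟨lam⁻¹ * Qf (grad F m), by
      conv_lhs => rw [hminv]
      rw [hσeq, smul_smul]⟩⟩
end

section
/- Let F = (x²+y²−2zt)/2 and let S = (x₀,y₀,z₀,0) be a point at infinity (t₀ = 0). Define θ = (x₀²+y₀²)[(x²+y²+t²)²(x₀²+y₀²) − 4(x²+y²+t²)(xx₀+yy₀−z₀t)z₀t − 4(xx₀+yy₀−z₀t)²t²]. Then there is no polynomial P ∈ ℂ[x,y] such that P(x,y)² = θ(x, y, (x²+y²)/2, 1), unless x₀²+y₀²+z₀² = 0 or x₀²+y₀² = 0. -/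
open MvPolynomial Complex

/-- The discriminant `θ` of the caustic quadratic for the paraboloid
`F = (x²+y²−2zt)/2` from a light source `S = [x₀:y₀:z₀:0]` at infinity,
restricted to the affine chart of the paraboloid `z = (x²+y²)/2`, `t = 1`:
`θ = (x₀²+y₀²)[(x²+y²+1)²(x₀²+y₀²) − 4(x²+y²+1)(xx₀+yy₀−z₀)z₀ − 4(xx₀+yy₀−z₀)²]`
as a polynomial in `x, y`. -/
noncomputable def theta6 (x0 y0 z0 : ℂ) : MvPolynomial (Fin 2) ℂ :=
  C (x0 ^ 2 + y0 ^ 2) *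
    ((X 0 ^ 2 + X 1 ^ 2 + 1) ^ 2 * C (x0 ^ 2 + y0 ^ 2) -
      4 * (X 0 ^ 2 + X 1 ^ 2 + 1) * (C x0 * X 0 + C y0 * X 1 - C z0) * C z0 -
      4 * (C x0 * X 0 + C y0 * X 1 - C z0) ^ 2)

/-- Unless `x₀²+y₀²+z₀² = 0` or `x₀²+y₀² = 0`, the discriminant `θ` restricted to
the paraboloid is not a square in `ℂ[x,y]`. -/
theorem stmt6 (x0 y0 z0 : ℂ) (h1 : x0 ^ 2 + y0 ^ 2 + z0 ^ 2 ≠ 0)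
    (h2 : x0 ^ 2 + y0 ^ 2 ≠ 0) :
    ¬∃ P : MvPolynomial (Fin 2) ℂ, P ^ 2 = theta6 x0 y0 z0 := by
  rintro ⟨P, hP⟩
  have ha : x0 - Complex.I * y0 ≠ 0 := by
    intro h
    exact h2 (by linear_combination (x0 + Complex.I * y0) * h + y0 ^ 2 * Complex.I_sq)
  obtain ⟨d, hd⟩ : ∃ d : ℂ, d ^ 2 = x0 ^ 2 + y0 ^ 2 + z0 ^ 2 :=
    IsAlgClosed.exists_pow_nat_eq _ (by norm_num)
  have hdne : d ≠ 0 := by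
    intro h; apply h1; rw [← hd, h]; ring
  -- substitute along the isotropic line x = t, y = -I t
  set g : Fin 2 → Polynomial ℂ := ![Polynomial.X, Polynomial.C (-Complex.I) * Polynomial.X]
    with hg
  -- the restriction of θ to this line
  have hf : MvPolynomial.aeval g (theta6 x0 y0 z0) =
      Polynomial.C (-4 * (x0 ^ 2 + y0 ^ 2) * (x0 - Complex.I * y0) ^ 2) * Polynomial.X ^ 2 +
        Polynomial.C (4 * (x0 ^ 2 + y0 ^ 2) * (x0 - Complex.I * y0) * z0) * Polynomial.X +
        Polynomial.C ((x0 ^ 2 + y0 ^ 2) ^ 2) := by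
    apply Polynomial.funext
    intro t
    simp [theta6, hg]
    ring_nf
    linear_combination (t ^ 2 * (x0 ^ 2 + y0 ^ 2) *
      ((t ^ 2 + (Complex.I * t) ^ 2 + 2) * (x0 ^ 2 + y0 ^ 2) -
        4 * (x0 * t - Complex.I * y0 * t - z0) * z0)) * Complex.I_sq
  set p : Polynomial ℂ := MvPolynomial.aeval g P with hp_def
  have hp2 : p ^ 2 = MvPolynomial.aeval g (theta6 x0 y0 z0) := by
    rw [hp_def, ← map_pow, hP]
  rw [hf] at hp2
  -- the root t₁ of the restricted quadratic
  obtain ⟨t1, ht1'⟩ : ∃ t : ℂ, 2 * (x0 - Complex.I * y0) * t = z0 + d :=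
    ⟨(z0 + d) / (2 * (x0 - Complex.I * y0)), by field_simp⟩
  -- p vanishes at t₁
  have hroot : p.eval t1 = 0 := by
    have h0 : (p.eval t1) ^ 2 = 0 := by
      have := congrArg (Polynomial.eval t1) hp2
      simp at this
      rw [this]
      linear_combination (-(x0 ^ 2 + y0 ^ 2)) * hd +
        ((x0 ^ 2 + y0 ^ 2) * (z0 - 2 * (x0 - Complex.I * y0) * t1 - d)) * ht1'
    exact pow_eq_zero_iff (by norm_num) |>.mp h0
  -- but the derivative of the restricted quadratic is nonzero at t₁
  have hder := congrArg (fun q => Polynomial.eval t1 (Polynomial.derivative q)) hp2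
  simp [Polynomial.derivative_pow, hroot] at hder
  -- hder : 0 = value of derivative at t1, which is -4 s a d ≠ 0
  have hz : (0 : ℂ) = -4 * (x0 ^ 2 + y0 ^ 2) * (x0 - Complex.I * y0) * d := by
    linear_combination hder - 4 * (x0 ^ 2 + y0 ^ 2) * (x0 - Complex.I * y0) * ht1'
  have hne : -4 * (x0 ^ 2 + y0 ^ 2) * (x0 - Complex.I * y0) * d ≠ 0 := by
    simp [h2, ha, hdne]
  exact hne hz.symm
end

section
/- Let F = xy − zt, S = [0:0:1:0], and define ψ^±: ℂ⁴ → ℂ⁴ by ψ^±(x,y,z,t) = (2ty ± 2tx, 2tx ± 2ty, x² + y² − t² ± 2tz, ±2t²). Then for every (x,y,z,t) with xy = zt, the image point (X,Y,Z,T) = ψ^±(x,y,z,t) satisfies X ∓ Y = 0 and ±TZ − (X² − T²)/2 = 0. Hence the caustic of the saddle surface from [0:0:1:0] is contained in the union of the two parabolas V(X−Y, TZ−(X²−T²)/2) and V(X+Y, −TZ−(X²−T²)/2). -/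
/-- The two sheets `ψ^±(x,y,z,t) = (2ty ± 2tx, 2tx ± 2ty, x²+y²−t²±2tz, ±2t²)` of the
caustic map of the saddle surface `xy = zt` from `[0:0:1:0]` land on the two parabolas
`V(X−Y, TZ−(X²−T²)/2)` and `V(X+Y, −TZ−(X²−T²)/2)` respectively. -/
theorem stmt8 (x y z t : ℂ) (h : x * y = z * t) :
    ((2 * t * y + 2 * t * x) - (2 * t * x + 2 * t * y) = 0 ∧
      (2 * t ^ 2) * (x ^ 2 + y ^ 2 - t ^ 2 + 2 * t * z) -
        ((2 * t * y + 2 * t * x) ^ 2 - (2 * t ^ 2) ^ 2) / 2 = 0) ∧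
    ((2 * t * y - 2 * t * x) + (2 * t * x - 2 * t * y) = 0 ∧
      -((-(2 * t ^ 2)) * (x ^ 2 + y ^ 2 - t ^ 2 - 2 * t * z)) -
        ((2 * t * y - 2 * t * x) ^ 2 - (-(2 * t ^ 2)) ^ 2) / 2 = 0) := by
  refine ⟨⟨by ring, by linear_combination (-4*t^2)*h⟩, by ring, by linear_combination (4*t^2)*h⟩
end

section
/- Let G ∈ ℂ[r,z,t] be homogeneous with only even powers of r, and let F(x,y,z,t) = G(√(x²+y²), z, t) (a polynomial since G is even in r). Write F_r := G_r∘h etc. with h(x,y,z,t) = (√(x²+y²),z,t) and r = √(x²+y²). Then the bordered Hessian determinants satisfy h_F = (F_r/r)·(h_G ∘ h), where h_F = det [[F_xx,F_xy,F_xz,F_x],[F_xy,F_yy,F_yz,F_y],[F_xz,F_yz,F_zz,F_z],[F_x,F_y,F_z,0]] and h_G = det [[G_rr,G_rz,G_r],[G_rz,G_zz,G_z],[G_r,G_z,0]]. -/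
/-!
Put `u = x/r`, `v = y/r`, so `u² + v² = 1`. The `(x, y)`-block of the Hessian of `F` is
`(F_r/r)·I + (F_rr - F_r/r)·n nᵀ` with `n = (u, v)`, and the border is `F_r·n`. Conjugating by
the rotation taking `n` to `(1, 0)` (determinant `u² + v² = 1`) turns this block into
`diag(F_rr, F_r/r)` and kills the second border entry, so the second row of the rotated matrix
is `(0, F_r/r, 0, 0)`; expanding along it leaves `F_r/r` times the bordered Hessian of `G`.
-/

open Matrix

variable {R : Type*} [CommRing R]

def planeRotation (u v : R) : Matrix (Fin 4) (Fin 4) R :=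
  !![u, v, 0, 0; -v, u, 0, 0; 0, 0, 1, 0; 0, 0, 0, 1]

theorem det_planeRotation (u v : R) : (planeRotation u v).det = u ^ 2 + v ^ 2 := by
  simp [planeRotation, det_succ_row_zero, Fin.sum_univ_succ, Fin.succAbove]
  ring

theorem det_bordered_of_diagonal_block (s p q c a b : R) :
    det !![p, 0, q, c; 0, s, 0, 0; q, 0, a, b; c, 0, b, 0] =
      s * det !![p, q, c; q, a, b; c, b, 0] := by
  simp [det_succ_row_zero, Fin.sum_univ_succ, Fin.succAbove]
  ring

theorem det_rotated_bordered (u v s p q c a b : R) (huv : u ^ 2 + v ^ 2 = 1) :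
    det !![s + u ^ 2 * (p - s), u * v * (p - s), u * q, u * c;
        u * v * (p - s), s + v ^ 2 * (p - s), v * q, v * c;
        u * q, v * q, a, b;
        u * c, v * c, b, 0] =
      s * det !![p, q, c; q, a, b; c, b, 0] := by
  have hconj : !![s + u ^ 2 * (p - s), u * v * (p - s), u * q, u * c;
        u * v * (p - s), s + v ^ 2 * (p - s), v * q, v * c;
        u * q, v * q, a, b;
        u * c, v * c, b, 0] =
      (planeRotation u v)ᵀ * !![p, 0, q, c; 0, s, 0, 0; q, 0, a, b; c, 0, b, 0] *
        planeRotation u v := by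
    ext i j
    fin_cases i <;> fin_cases j <;>
      simp [planeRotation, mul_apply, Fin.sum_univ_succ] <;>
      grind
  rw [hconj, det_mul, det_mul, det_transpose, det_planeRotation, huv,
    det_bordered_of_diagonal_block]
  ring

theorem stmt12_general (x y r Fr Frr Frz Fzz Fz : ℂ) (hr : r ^ 2 = x ^ 2 + y ^ 2)
    (hr0 : r ≠ 0) :
    Matrix.det
      !![Fr / r + (x ^ 2 / r ^ 2) * Frr - (x ^ 2 / r ^ 3) * Fr,
          (x * y / r ^ 2) * Frr - (x * y / r ^ 3) * Fr, (x / r) * Frz, (x / r) * Fr;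
        (x * y / r ^ 2) * Frr - (x * y / r ^ 3) * Fr,
          Fr / r + (y ^ 2 / r ^ 2) * Frr - (y ^ 2 / r ^ 3) * Fr, (y / r) * Frz,
          (y / r) * Fr;
        (x / r) * Frz, (y / r) * Frz, Fzz, Fz;
        (x / r) * Fr, (y / r) * Fr, Fz, 0] =
      (Fr / r) * Matrix.det !![Frr, Frz, Fr; Frz, Fzz, Fz; Fr, Fz, 0] := by
  have hunit : (x / r) ^ 2 + (y / r) ^ 2 = 1 := by
    field_simp
    exact hr.symm
  convert det_rotated_bordered (x / r) (y / r) (Fr / r) Frr Frz Fr Fzz Fz hunit using 7 <;>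
    field_simp <;> ring

/-- Chain-rule identity for a surface of revolution: with `r² = x² + y²` and the
first and second derivatives of `F = G(√(x²+y²),z,t)` expressed by the chain rule in
terms of those of `G`, the two bordered Hessian determinants satisfy
`h_F = (F_r/r)·h_G`. -/
theorem stmt12 (x y r Fr Frr Frz Fzz Fz : ℂ) (hr : r ^ 2 = x ^ 2 + y ^ 2)
    (hy : y ≠ 0) (hr0 : r ≠ 0) :
    Matrix.det
      !![Fr / r + (x ^ 2 / r ^ 2) * Frr - (x ^ 2 / r ^ 3) * Fr,
          (x * y / r ^ 2) * Frr - (x * y / r ^ 3) * Fr, (x / r) * Frz, (x / r) * Fr;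
        (x * y / r ^ 2) * Frr - (x * y / r ^ 3) * Fr,
          Fr / r + (y ^ 2 / r ^ 2) * Frr - (y ^ 2 / r ^ 3) * Fr, (y / r) * Frz,
          (y / r) * Fr;
        (x / r) * Frz, (y / r) * Frz, Fzz, Fz;
        (x / r) * Fr, (y / r) * Fr, Fz, 0] =
      (Fr / r) * Matrix.det !![Frr, Frz, Fr; Frz, Fzz, Fz; Fr, Fz, 0] :=
  stmt12_general x y r Fr Frr Frz Fzz Fz hr hr0
end
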